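/- For p ∈ (1, ∞) and Ψ(x) = |x|^(p-2)·x, if 0 ≤ α ≤ min(1, p−1), then for all real x, y: |Ψ(y) − Ψ(x)| ≤ max(2^(2−p), (p−1)·2^(2−p), 1)·|y − x|^α·(|y| + |x|)^(p−1−α). -/

import Mathlib

/-!
Since `|y - x| ≤ |y| + |x|`, the bound for `α` follows from the one for `β = min 1 (p - 1)`.
As `Ψ` is odd and monotone, it suffices to treat `0 ≤ x ≤ y` and `x ≤ 0 ≤ y`.
For `p ≤ 2` the map `t ↦ t ^ (p - 1)` is subadditive and concave on `[0, ∞)`, which gives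
`|Ψ y - Ψ x| ≤ 2 ^ (2 - p) |y - x| ^ (p - 1)`.
For `p ≥ 2` opposite signs are handled by superadditivity of `t ↦ t ^ (p - 1)`; for
`0 ≤ x ≤ y` and `q = p - 1`, the difference `y ^ q - x ^ q` is compared with
`(y - x) (x + y) ^ (q - 1)` by the mean value theorem applied to `t ^ q - (x + y - t) ^ q`
when `q ≤ 2`, and by two tangent-line (Bernoulli) estimates for `t ↦ t ^ (q - 1)` when `q ≥ 2`.
-/

noncomputable def Psi (p : ℝ) (x : ℝ) : ℝ := Real.sign x * |x| ^ (p - 1)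

open Real Set

lemma rpow_add_rpow_le_two_rpow {s a b : ℝ} (hs₀ : 0 ≤ s) (hs₁ : s ≤ 1) (ha : 0 ≤ a)
    (hb : 0 ≤ b) : a ^ s + b ^ s ≤ 2 ^ (1 - s) * (a + b) ^ s := by
  have hmid := (concaveOn_rpow hs₀ hs₁).2 ha hb (by norm_num : (0 : ℝ) ≤ 1 / 2)
    (by norm_num : (0 : ℝ) ≤ 1 / 2) (add_halves 1)
  simp only [smul_eq_mul, one_div_mul_eq_div] at hmid
  rw [← add_div, ← add_div, div_rpow (add_nonneg ha hb) zero_le_two] at hmid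
  rw [rpow_sub two_pos, rpow_one]
  have h2s : 0 < (2 : ℝ) ^ s := rpow_pos_of_pos two_pos s
  rw [div_mul_eq_mul_div, le_div_iff₀ h2s]
  rw [le_div_iff₀ h2s] at hmid
  linarith

lemma rpow_sub_rpow_le_rpow_sub {s x y : ℝ} (hs₀ : 0 ≤ s) (hs₁ : s ≤ 1) (hx : 0 ≤ x)
    (hxy : x ≤ y) : y ^ s - x ^ s ≤ (y - x) ^ s := by
  have := rpow_add_le_add_rpow (sub_nonneg.2 hxy) hx hs₀ hs₁
  rw [sub_add_cancel] at this
  linarith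

lemma rpow_add_mul_sub_le_rpow {r u y : ℝ} (hr : 1 ≤ r) (hu : 0 ≤ u) (hy : 0 < y) :
    y ^ r + r * y ^ (r - 1) * (u - y) ≤ u ^ r := by
  have hbern := one_add_mul_self_le_rpow_one_add
    (by linarith [div_nonneg hu hy.le] : -1 ≤ u / y - 1) hr
  rw [add_sub_cancel, div_rpow hu hy.le, le_div_iff₀ (rpow_pos_of_pos hy r)] at hbern
  rw [rpow_sub_one hy.ne']
  refine le_of_eq_of_le ?_ hbern
  field_simp

lemma rpow_sub_rpow_le_of_two_le {q x y : ℝ} (hq : 2 ≤ q) (hx : 0 ≤ x) (hxy : x ≤ y) :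
    y ^ q - x ^ q ≤ (y - x) * (x + y) ^ (q - 1) := by
  obtain rfl | hy := (hx.trans hxy).eq_or_lt
  · obtain rfl : x = 0 := le_antisymm hxy hx
    simp
  have hq1 : 1 ≤ q - 1 := by linarith
  have hsum := rpow_add_mul_sub_le_rpow hq1 (add_nonneg hx hy.le) hy
  have hleft := rpow_add_mul_sub_le_rpow hq1 hx hy
  have hsplit : ∀ z : ℝ, 0 ≤ z → z ^ q = z * z ^ (q - 1) := fun z hz => by
    rw [← rpow_one_add' hz (by linarith), add_sub_cancel]
  rw [hsplit y hy.le, hsplit x hx]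
  nlinarith [mul_le_mul_of_nonneg_left hleft hx,
    mul_le_mul_of_nonneg_left hsum (sub_nonneg.2 hxy)]

lemma rpow_sub_rpow_le_of_le_two {q x y : ℝ} (hq₁ : 1 ≤ q) (hq₂ : q ≤ 2) (hx : 0 ≤ x)
    (hxy : x ≤ y) : y ^ q - x ^ q ≤ q * 2 ^ (1 - q) * (y - x) * (x + y) ^ (q - 1) := by
  set S := x + y
  -- `G` vanishes at `S / 2` and `G y = y ^ q - x ^ q`; concavity of `t ↦ t ^ (q - 1)` bounds `G'`.
  let G : ℝ → ℝ := fun t => t ^ q - (S - t) ^ q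
  have hG : ∀ t, HasDerivAt G (q * (t ^ (q - 1) + (S - t) ^ (q - 1))) t := fun t => by
    have h₁ := hasDerivAt_rpow_const (x := t) (Or.inr hq₁)
    have h₂ := ((hasDerivAt_id t).const_sub S).rpow_const (p := q) (Or.inr hq₁)
    refine (h₁.sub h₂).congr_deriv ?_
    simp only [id]
    ring
  have hmid : S / 2 ≤ y := by linarith
  have hG'_le : ∀ t ∈ interior (Icc (S / 2) y), deriv G t ≤ q * (2 ^ (2 - q) * S ^ (q - 1)) := by
    intro t ht
    rw [interior_Icc] at ht
    have hconc := rpow_add_rpow_le_two_rpow (s := q - 1) (by linarith) (by linarith)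
      (by linarith [ht.1] : 0 ≤ t) (by linarith [ht.2] : 0 ≤ S - t)
    rw [add_sub_cancel, show 1 - (q - 1) = 2 - q by ring] at hconc
    rw [(hG t).deriv]
    gcongr
  have hmvt := (convex_Icc (S / 2) y).image_sub_le_mul_sub_of_deriv_le
    (fun t _ => (hG t).continuousAt.continuousWithinAt)
    (fun t _ => (hG t).differentiableAt.differentiableWithinAt) hG'_le
    (S / 2) ⟨le_rfl, hmid⟩ y ⟨hmid, le_rfl⟩ hmid
  have hGy : G y = y ^ q - x ^ q := by simp only [G, S, add_sub_cancel_right]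
  have hGmid : G (S / 2) = 0 := by simp only [G, sub_half, sub_self]
  have htwo : (2 : ℝ) ^ (2 - q) = 2 * 2 ^ (1 - q) := by
    rw [show 2 - q = 1 + (1 - q) by ring, rpow_add two_pos, rpow_one]
  rw [hGy, hGmid, sub_zero, htwo] at hmvt
  calc y ^ q - x ^ q ≤ q * (2 * 2 ^ (1 - q) * S ^ (q - 1)) * (y - S / 2) := hmvt
    _ = q * 2 ^ (1 - q) * (y - x) * S ^ (q - 1) := by ring

lemma rpow_mul_rpow_le_of_le {d s α β γ : ℝ} (hd : 0 ≤ d) (hds : d ≤ s) (hα : 0 ≤ α)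
    (hαβ : α ≤ β) : d ^ β * s ^ (γ - β) ≤ d ^ α * s ^ (γ - α) := by
  obtain rfl | hd := hd.eq_or_lt
  · obtain rfl | hβ := (hα.trans hαβ).eq_or_lt
    · rw [le_antisymm hαβ hα]
    · rw [zero_rpow hβ.ne', zero_mul]
      exact mul_nonneg (rpow_nonneg le_rfl α) (rpow_nonneg hds _)
  have hs := hd.trans_le hds
  calc d ^ β * s ^ (γ - β) = d ^ α * (d ^ (β - α) * s ^ (γ - β)) := by
        rw [← mul_assoc, ← rpow_add hd, add_sub_cancel]
    _ ≤ d ^ α * (s ^ (β - α) * s ^ (γ - β)) := by gcongr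
    _ = d ^ α * s ^ (γ - α) := by rw [← rpow_add hs, sub_add_sub_cancel']

lemma psi_neg (p x : ℝ) : Psi p (-x) = -Psi p x := by
  rw [Psi, Psi, sign_neg, abs_neg, neg_mul]

lemma psi_of_nonneg {p x : ℝ} (hp : p ≠ 1) (hx : 0 ≤ x) : Psi p x = x ^ (p - 1) := by
  obtain rfl | hx := hx.eq_or_lt
  · rw [Psi, sign_zero, zero_mul, zero_rpow (sub_ne_zero.2 hp)]
  · rw [Psi, sign_of_pos hx, abs_of_pos hx, one_mul]

lemma psi_of_nonpos {p x : ℝ} (hp : p ≠ 1) (hx : x ≤ 0) : Psi p x = -(-x) ^ (p - 1) := by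
  rw [← psi_of_nonneg hp (neg_nonneg.2 hx), psi_neg, neg_neg]

lemma psi_monotone {p : ℝ} (hp : 1 < p) : Monotone (Psi p) :=
  monotone_of_odd_of_monotoneOn_nonneg (psi_neg p) fun x hx y hy hxy => by
    rw [psi_of_nonneg hp.ne' hx, psi_of_nonneg hp.ne' hy]
    exact rpow_le_rpow hx hxy (by linarith)

lemma abs_psi_sub_le_of_nonneg {p : ℝ} (hp : 1 < p) {F : ℝ → ℝ → ℝ}
    (hsame : ∀ ⦃x y : ℝ⦄, 0 ≤ x → x ≤ y → y ^ (p - 1) - x ^ (p - 1) ≤ F (y - x) (y + x))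
    (hopp : ∀ ⦃u v : ℝ⦄, 0 ≤ u → 0 ≤ v → u ^ (p - 1) + v ^ (p - 1) ≤ F (u + v) (u + v))
    (x y : ℝ) : |Psi p y - Psi p x| ≤ F |y - x| (|y| + |x|) := by
  wlog hxy : x ≤ y generalizing x y
  · rw [abs_sub_comm, abs_sub_comm y, add_comm]
    exact this y x (le_of_not_ge hxy)
  rw [abs_of_nonneg (sub_nonneg.2 (psi_monotone hp hxy)), abs_of_nonneg (sub_nonneg.2 hxy)]
  rcases le_total 0 x with hx | hx
  · rw [psi_of_nonneg hp.ne' hx, psi_of_nonneg hp.ne' (hx.trans hxy), abs_of_nonneg hx,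
      abs_of_nonneg (hx.trans hxy)]
    exact hsame hx hxy
  rcases le_total y 0 with hy | hy
  · rw [psi_of_nonpos hp.ne' hx, psi_of_nonpos hp.ne' hy, abs_of_nonpos hx, abs_of_nonpos hy]
    calc -(-y) ^ (p - 1) - -(-x) ^ (p - 1) = (-x) ^ (p - 1) - (-y) ^ (p - 1) := by ring
      _ ≤ F (-x - -y) (-x + -y) := hsame (neg_nonneg.2 hy) (neg_le_neg hxy)
      _ = F (y - x) (-y + -x) := by congr 1 <;> ring
  · rw [psi_of_nonneg hp.ne' hy, psi_of_nonpos hp.ne' hx, abs_of_nonneg hy, abs_of_nonpos hx]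
    convert hopp hy (neg_nonneg.2 hx) using 2 <;> ring

lemma abs_psi_sub_le_of_le_two {p : ℝ} (hp : 1 < p) (hp₂ : p ≤ 2) (x y : ℝ) :
    |Psi p y - Psi p x| ≤ 2 ^ (2 - p) * |y - x| ^ (p - 1) := by
  have hs₀ : 0 ≤ p - 1 := by linarith
  have hs₁ : p - 1 ≤ 1 := by linarith
  refine abs_psi_sub_le_of_nonneg (F := fun d _ => 2 ^ (2 - p) * d ^ (p - 1)) hp
    (fun x y hx hxy => ?_) (fun u v hu hv => ?_) x y
  · calc y ^ (p - 1) - x ^ (p - 1) ≤ (y - x) ^ (p - 1) :=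
          rpow_sub_rpow_le_rpow_sub hs₀ hs₁ hx hxy
      _ ≤ 2 ^ (2 - p) * (y - x) ^ (p - 1) :=
          le_mul_of_one_le_left (rpow_nonneg (sub_nonneg.2 hxy) _)
            (one_le_rpow one_le_two (by linarith))
  · simpa only [sub_sub_cancel_left, sub_neg_eq_add, show 1 - (p - 1) = 2 - p by ring] using
      rpow_add_rpow_le_two_rpow hs₀ hs₁ hu hv

lemma abs_psi_sub_le_of_two_le {p : ℝ} (hp : 2 ≤ p) (x y : ℝ) :
    |Psi p y - Psi p x| ≤ max ((p - 1) * 2 ^ (2 - p)) 1 * (|y - x| * (|y| + |x|) ^ (p - 2)) := by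
  set K := max ((p - 1) * 2 ^ (2 - p)) 1
  refine abs_psi_sub_le_of_nonneg (F := fun d s => K * (d * s ^ (p - 2))) (by linarith)
    (fun x y hx hxy => ?_) (fun u v hu hv => ?_) x y
  · rw [add_comm y x]
    have hprod : 0 ≤ (y - x) * (x + y) ^ (p - 2) :=
      mul_nonneg (sub_nonneg.2 hxy) (rpow_nonneg (by linarith) _)
    rcases le_total p 3 with hp₃ | hp₃
    · have := rpow_sub_rpow_le_of_le_two (q := p - 1) (by linarith) (by linarith) hx hxy
      rw [show 1 - (p - 1) = 2 - p by ring, show p - 1 - 1 = p - 2 by ring] at this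
      linarith [mul_le_mul_of_nonneg_right (le_max_left _ 1 : _ ≤ K) hprod]
    · have := rpow_sub_rpow_le_of_two_le (q := p - 1) (by linarith) hx hxy
      rw [show p - 1 - 1 = p - 2 by ring] at this
      linarith [mul_le_mul_of_nonneg_right (le_max_right _ 1 : 1 ≤ K) hprod]
  · have huv : 0 ≤ u + v := add_nonneg hu hv
    calc u ^ (p - 1) + v ^ (p - 1) ≤ (u + v) ^ (p - 1) := add_rpow_le_rpow_add hu hv (by linarith)
      _ = 1 * ((u + v) * (u + v) ^ (p - 2)) := by
          rw [one_mul, ← rpow_one_add' huv (by linarith)]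
          ring_nf
      _ ≤ K * ((u + v) * (u + v) ^ (p - 2)) :=
          mul_le_mul_of_nonneg_right (le_max_right _ _) (mul_nonneg huv (rpow_nonneg huv _))

lemma abs_psi_sub_le {p : ℝ} (hp : 1 < p) (x y : ℝ) :
    |Psi p y - Psi p x| ≤ max (max (2 ^ (2 - p)) ((p - 1) * 2 ^ (2 - p))) 1 *
      (|y - x| ^ min 1 (p - 1) * (|y| + |x|) ^ (p - 1 - min 1 (p - 1))) := by
  rcases le_total p 2 with hp₂ | hp₂
  · rw [min_eq_right (by linarith), sub_self, rpow_zero, mul_one]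
    refine (abs_psi_sub_le_of_le_two hp hp₂ x y).trans ?_
    gcongr
    exact (le_max_left _ _).trans (le_max_left _ _)
  · rw [min_eq_left (by linarith), rpow_one, show p - 1 - 1 = p - 2 by ring]
    refine (abs_psi_sub_le_of_two_le hp₂ x y).trans ?_
    gcongr
    exact le_max_right _ _

theorem psi_continuity (p α : ℝ) (hp : 1 < p) (hα0 : 0 ≤ α) (hα : α ≤ min 1 (p - 1))
    (x y : ℝ) :
    |Psi p y - Psi p x|
      ≤ max (max (2 ^ (2 - p)) ((p - 1) * 2 ^ (2 - p))) 1 * |y - x| ^ α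
          * (|y| + |x|) ^ (p - 1 - α) := by
  rw [mul_assoc]
  exact (abs_psi_sub_le hp x y).trans <| mul_le_mul_of_nonneg_left
    (rpow_mul_rpow_le_of_le (abs_nonneg _) (abs_sub _ _) hα0 hα) (by positivity)
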